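/- Let A ⊂ L^p (0 ≤ p ≤ ∞) be an acceptance set containing 0 and S = (S_0, S_T) a traded asset. (i) If ρ_{A,S} is cash subadditive, then S_T − S_0·1_Ω ∈ closure(A). (ii) If A is coherent and S_T − S_0·1_Ω ∈ A, then ρ_{A,S} is cash subadditive. In particular, if A is closed and coherent, then ρ_{A,S} is cash subadditive if and only if S_T − S_0·1_Ω ∈ A. -/

import Mathlib

open MeasureTheory Filter Topology ENNReal

variable {Ω : Type*} [MeasureSpace Ω] [IsProbabilityMeasure (volume : Measure Ω)]

/-- The risk measure ρ_{A,S}. -/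
noncomputable def rho (p : ℝ≥0∞) [Fact (1 ≤ p)] (A : Set (Lp ℝ p (volume : Measure Ω)))
    (S0 : ℝ) (ST : Lp ℝ p (volume : Measure Ω)) (x : Lp ℝ p (volume : Measure Ω)) : EReal :=
  sInf ((fun r : ℝ => (r : EReal)) '' {r : ℝ | x + (r / S0) • ST ∈ A})

/-- The constant function 1 as an element of Lᵖ. -/
noncomputable def oneLp (p : ℝ≥0∞) : Lp ℝ p (volume : Measure Ω) :=
  (memLp_const (1 : ℝ)).toLp _

/-- ρ is cash subadditive: ρ(X + λ·1) ≥ ρ(X) − λ for all λ > 0. -/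
def CashSubadditive (p : ℝ≥0∞) [Fact (1 ≤ p)]
    (ρ : Lp ℝ p (volume : Measure Ω) → EReal) : Prop :=
  ∀ (x : Lp ℝ p (volume : Measure Ω)) (l : ℝ), 0 < l →
    ρ x - (l : EReal) ≤ ρ (x + l • oneLp p)

/-! Necessity: cash subadditivity at `X = -S₀·1` with `λ = S₀` gives
`ρ(-S₀·1) ≤ ρ(0) + S₀ ≤ S₀`, so by monotonicity `-S₀·1 + (r/S₀)·S_T ∈ A` for every `r > S₀`, and
letting `r ↓ S₀` puts `S_T - S₀·1` in the closure of `A`.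
Sufficiency: a convex cone is closed under addition, so adding `(λ/S₀)·(S_T - S₀·1) ∈ A` to an
acceptable `X + λ·1 + (r/S₀)·S_T` shows `X + ((r+λ)/S₀)·S_T ∈ A`, i.e. `ρ(X) ≤ ρ(X + λ·1) + λ`. -/

instance Lp.isOrderedModule {α : Type*} [MeasurableSpace α] {μ : Measure α} {p : ℝ≥0∞}
    [Fact (1 ≤ p)] : IsOrderedModule ℝ (Lp ℝ p μ) :=
  .of_smul_nonneg fun c hc f hf => by
    rw [← Lp.coeFn_nonneg] at hf ⊢
    filter_upwards [hf, Lp.coeFn_smul c f] with ω hfω hcf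
    rw [hcf]
    exact mul_nonneg hc hfω

theorem add_mem_of_convex_of_smul_mem {E : Type*} [AddCommGroup E] [Module ℝ E] {A : Set E}
    (hconv : Convex ℝ A) (hcone : ∀ c : ℝ, 0 ≤ c → ∀ a ∈ A, c • a ∈ A) {a b : E}
    (ha : a ∈ A) (hb : b ∈ A) : a + b ∈ A := by
  have hmid : (1 / 2 : ℝ) • a + (1 / 2 : ℝ) • b ∈ A :=
    hconv ha hb (by norm_num) (by norm_num) (by norm_num)
  convert hcone 2 zero_le_two _ hmid using 1
  rw [smul_add, smul_smul, smul_smul]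
  norm_num

section rho

variable {p : ℝ≥0∞} [Fact (1 ≤ p)] {A : Set (Lp ℝ p (volume : Measure Ω))} {S0 : ℝ}
  {ST x : Lp ℝ p (volume : Measure Ω)}

omit [IsProbabilityMeasure (volume : Measure Ω)]

theorem rho_le_of_mem {r : ℝ} (h : x + (r / S0) • ST ∈ A) : rho p A S0 ST x ≤ r :=
  sInf_le ⟨r, h, rfl⟩

theorem add_div_smul_mem_of_le (hA : ∀ a ∈ A, ∀ b, a ≤ b → b ∈ A) (hS0 : 0 < S0) (hST : 0 ≤ ST)
    {r s : ℝ} (h : x + (r / S0) • ST ∈ A) (hrs : r ≤ s) : x + (s / S0) • ST ∈ A :=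
  hA _ h _ <| add_le_add_right (smul_le_smul_of_nonneg_right
    (div_le_div_of_nonneg_right hrs hS0.le) hST) x

theorem add_div_smul_mem_of_rho_lt (hA : ∀ a ∈ A, ∀ b, a ≤ b → b ∈ A) (hS0 : 0 < S0)
    (hST : 0 ≤ ST) {s : ℝ} (h : rho p A S0 ST x < s) : x + (s / S0) • ST ∈ A := by
  obtain ⟨_, ⟨r, hr, rfl⟩, hrs⟩ := sInf_lt_iff.1 h
  exact add_div_smul_mem_of_le hA hS0 hST hr (EReal.coe_lt_coe_iff.1 hrs).le

theorem add_div_smul_mem_closure_of_rho_le (hA : ∀ a ∈ A, ∀ b, a ≤ b → b ∈ A) (hS0 : 0 < S0)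
    (hST : 0 ≤ ST) {m : ℝ} (h : rho p A S0 ST x ≤ m) : x + (m / S0) • ST ∈ closure A := by
  have hcont : Continuous fun r : ℝ => x + (r / S0) • ST := by fun_prop
  refine mem_closure_of_tendsto
    (hcont.tendsto m |>.mono_left (nhdsWithin_le_nhds (s := Set.Ioi m))) ?_
  filter_upwards [self_mem_nhdsWithin] with s hs
  exact add_div_smul_mem_of_rho_lt hA hS0 hST (h.trans_lt (EReal.coe_lt_coe_iff.2 hs))

variable [IsProbabilityMeasure (volume : Measure Ω)]

theorem sub_smul_oneLp_mem_closure_of_cashSubadditive (hA : ∀ a ∈ A, ∀ b, a ≤ b → b ∈ A)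
    (h0 : 0 ∈ A) (hS0 : 0 < S0) (hST : 0 ≤ ST) (hcs : CashSubadditive p (rho p A S0 ST)) :
    ST - S0 • oneLp p ∈ closure A := by
  have hrho : rho p A S0 ST (-(S0 • oneLp p)) ≤ S0 := by
    have hzero : rho p A S0 ST 0 ≤ 0 := rho_le_of_mem (r := 0) (by simpa using h0)
    have := hcs (-(S0 • oneLp p)) S0 hS0
    rw [neg_add_cancel] at this
    exact EReal.sub_nonpos.1 (this.trans hzero)
  convert add_div_smul_mem_closure_of_rho_le hA hS0 hST hrho using 1
  rw [div_self hS0.ne', one_smul, neg_add_eq_sub]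

theorem rho_sub_le_rho_add_smul_oneLp (hadd : ∀ a ∈ A, ∀ b ∈ A, a + b ∈ A) (hS0 : S0 ≠ 0)
    {l : ℝ} (hl : (l / S0) • (ST - S0 • oneLp p) ∈ A) :
    rho p A S0 ST x - l ≤ rho p A S0 ST (x + l • oneLp p) := by
  refine le_sInf ?_
  rintro _ ⟨r, hr, rfl⟩
  have hsum : x + ((r + l) / S0) • ST ∈ A := by
    convert hadd _ hr _ hl using 1
    rw [smul_sub, smul_smul, div_mul_cancel₀ _ hS0, add_div, add_smul]
    abel
  refine EReal.sub_le_of_le_add ?_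
  exact_mod_cast rho_le_of_mem hsum

theorem cashSubadditive_of_sub_smul_oneLp_mem (hconv : Convex ℝ A)
    (hcone : ∀ c : ℝ, 0 ≤ c → ∀ a ∈ A, c • a ∈ A) (hS0 : 0 < S0)
    (hmem : ST - S0 • oneLp p ∈ A) : CashSubadditive p (rho p A S0 ST) := fun _ _ hl =>
  rho_sub_le_rho_add_smul_oneLp (fun _ ha _ hb => add_mem_of_convex_of_smul_mem hconv hcone ha hb)
    hS0.ne' (hcone _ (div_nonneg hl.le hS0.le) _ hmem)

end rho

theorem cashSubadditive_characterization_general (p : ℝ≥0∞) [Fact (1 ≤ p)]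
    (A : Set (Lp ℝ p (volume : Measure Ω)))
    (hmono : ∀ x ∈ A, ∀ y, x ≤ y → y ∈ A) (h0 : (0 : Lp ℝ p (volume : Measure Ω)) ∈ A)
    (S0 : ℝ) (hS0 : 0 < S0)
    (ST : Lp ℝ p (volume : Measure Ω)) (hST : 0 ≤ ST) :
    (CashSubadditive p (rho p A S0 ST) → ST - S0 • oneLp p ∈ closure A) ∧
    ((Convex ℝ A ∧ ∀ c : ℝ, 0 ≤ c → ∀ a ∈ A, c • a ∈ A) → ST - S0 • oneLp p ∈ A →
      CashSubadditive p (rho p A S0 ST)) ∧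
    (IsClosed A → (Convex ℝ A ∧ ∀ c : ℝ, 0 ≤ c → ∀ a ∈ A, c • a ∈ A) →
      (CashSubadditive p (rho p A S0 ST) ↔ ST - S0 • oneLp p ∈ A)) := by
  have necessity := sub_smul_oneLp_mem_closure_of_cashSubadditive hmono h0 hS0 hST
  have sufficiency : (Convex ℝ A ∧ ∀ c : ℝ, 0 ≤ c → ∀ a ∈ A, c • a ∈ A) →
      ST - S0 • oneLp p ∈ A → CashSubadditive p (rho p A S0 ST) := fun ⟨hconv, hcone⟩ =>
    cashSubadditive_of_sub_smul_oneLp_mem hconv hcone hS0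
  refine ⟨necessity, sufficiency, fun hclosed hcoh => ⟨fun hcs => ?_, sufficiency hcoh⟩⟩
  simpa only [hclosed.closure_eq] using necessity hcs

/-- (i) if ρ_{A,S} is cash subadditive then S_T − S₀·1 ∈ closure(A);
(ii) if A is coherent and S_T − S₀·1 ∈ A then ρ_{A,S} is cash subadditive; in
particular for A closed and coherent, cash subadditivity holds iff S_T − S₀·1 ∈ A. -/
theorem cashSubadditive_characterization (p : ℝ≥0∞) [Fact (1 ≤ p)]
    (A : Set (Lp ℝ p (volume : Measure Ω)))
    (hAne : A.Nonempty) (hAproper : A ≠ Set.univ)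
    (hmono : ∀ x ∈ A, ∀ y, x ≤ y → y ∈ A) (h0 : (0 : Lp ℝ p (volume : Measure Ω)) ∈ A)
    (S0 : ℝ) (hS0 : 0 < S0)
    (ST : Lp ℝ p (volume : Measure Ω)) (hST : 0 ≤ ST) (hSTne : ST ≠ 0) :
    (CashSubadditive p (rho p A S0 ST) → ST - S0 • oneLp p ∈ closure A) ∧
    ((Convex ℝ A ∧ ∀ c : ℝ, 0 ≤ c → ∀ a ∈ A, c • a ∈ A) → ST - S0 • oneLp p ∈ A →
      CashSubadditive p (rho p A S0 ST)) ∧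
    (IsClosed A → (Convex ℝ A ∧ ∀ c : ℝ, 0 ≤ c → ∀ a ∈ A, c • a ∈ A) →
      (CashSubadditive p (rho p A S0 ST) ↔ ST - S0 • oneLp p ∈ A)) :=
  cashSubadditive_characterization_general p A hmono h0 S0 hS0 ST hST
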